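/- Pairwise likelihood, no exceedances: let β, κ > 0, a₁, a₂, a₃ > 0 with a₁ + a₂ = a₂ + a₃ = α, let μ = Γ(a₁,β) ⊗ Γ(a₂,β) ⊗ Γ(a₃,β) on ℝ³, and set Λ₁ = s₁ + s₂, Λ₂ = s₂ + s₃. Then ∫_{ℝ³} (1 − e^{−κΛ₁})(1 − e^{−κΛ₂}) dμ = 1 − 2(1 + κ/β)^{−α} + (1 + κ/β)^{−a₁−a₃} (1 + 2κ/β)^{−a₂}. -/

import Mathlib

open MeasureTheory ProbabilityTheory Real

/-! Multiplying the `Γ(a, β)` density by `e^{-tx}` gives `(β / (β + t))^a` times the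
`Γ(a, β + t)` density, so `E e^{-tS} = (1 + t/β)^{-a}` for `t > -β`. Expanding
`(1 - e^{-κΛ₁})(1 - e^{-κΛ₂}) = 1 - e^{-κΛ₁} - e^{-κΛ₂} + e^{-κ(S₁ + 2S₂ + S₃)}`, every term is
the exponential of a linear form in the independent slices and factorizes; the shared slice `S₂`
enters the last term with weight `2κ`, which produces the factor `(1 + 2κ/β)^{-a₂}`. -/

/-- The slice measure: product of three Gamma distributions with shapes
`a₁, a₂, a₃` and common rate `β`, the law of the slices of the trawl sets at two
time points, with latent values `Λ₁ = S₁ + S₂`, `Λ₂ = S₂ + S₃`. -/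
noncomputable def sliceMeasure (a₁ a₂ a₃ β : ℝ) : Measure (ℝ × ℝ × ℝ) :=
  (gammaMeasure a₁ β).prod ((gammaMeasure a₂ β).prod (gammaMeasure a₃ β))

instance sFinite_gammaMeasure (a β : ℝ) : SFinite (gammaMeasure a β) := by
  rw [gammaMeasure]; infer_instance

lemma isProbabilityMeasure_sliceMeasure {a₁ a₂ a₃ β : ℝ} (ha₁ : 0 < a₁) (ha₂ : 0 < a₂)
    (ha₃ : 0 < a₃) (hβ : 0 < β) : IsProbabilityMeasure (sliceMeasure a₁ a₂ a₃ β) := by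
  have := isProbabilityMeasure_gammaMeasure ha₁ hβ
  have := isProbabilityMeasure_gammaMeasure ha₂ hβ
  have := isProbabilityMeasure_gammaMeasure ha₃ hβ
  rw [sliceMeasure]; infer_instance

lemma gammaPDF_mul_exp_neg_mul {a β t : ℝ} (ha : 0 < a) (hβ : 0 ≤ β) (hβt : 0 < β + t) (x : ℝ) :
    gammaPDF a β x * ENNReal.ofReal (exp (-(t * x)))
      = ENNReal.ofReal ((β / (β + t)) ^ a) * gammaPDF a (β + t) x := by
  rcases lt_or_ge x 0 with hx | hx
  · simp only [gammaPDF_of_neg hx, zero_mul, mul_zero]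
  rw [gammaPDF_of_nonneg hx, gammaPDF_of_nonneg hx, ← ENNReal.ofReal_mul (by positivity),
    ← ENNReal.ofReal_mul (by positivity)]
  congr 1
  have hexp : exp (-((β + t) * x)) = exp (-(β * x)) * exp (-(t * x)) := by
    rw [← exp_add]; ring_nf
  rw [div_rpow hβ hβt.le, hexp]
  field_simp

lemma lintegral_exp_neg_mul_gammaMeasure {a β t : ℝ} (ha : 0 < a) (hβ : 0 ≤ β)
    (hβt : 0 < β + t) :
    ∫⁻ x, ENNReal.ofReal (exp (-(t * x))) ∂gammaMeasure a β
      = ENNReal.ofReal ((β / (β + t)) ^ a) := by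
  have hpdf (r : ℝ) : Measurable (gammaPDF a r) := (measurable_gammaPDFReal a r).ennreal_ofReal
  rw [gammaMeasure, lintegral_withDensity_eq_lintegral_mul _ (hpdf β) (by fun_prop)]
  simp only [Pi.mul_apply, gammaPDF_mul_exp_neg_mul ha hβ hβt]
  rw [lintegral_const_mul _ (hpdf (β + t)),
    lintegral_gammaPDF_eq_one ha hβt, mul_one]

lemma integrable_exp_neg_mul_gammaMeasure {a β t : ℝ} (ha : 0 < a) (hβ : 0 ≤ β)
    (hβt : 0 < β + t) :
    Integrable (fun x => exp (-(t * x))) (gammaMeasure a β) := by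
  refine ⟨by fun_prop, ?_⟩
  rw [hasFiniteIntegral_iff_ofReal (ae_of_all _ fun x => (exp_pos _).le),
    lintegral_exp_neg_mul_gammaMeasure ha hβ hβt]
  exact ENNReal.ofReal_lt_top

lemma integral_exp_neg_mul_gammaMeasure {a β t : ℝ} (ha : 0 < a) (hβ : 0 < β)
    (hβt : 0 < β + t) :
    ∫ x, exp (-(t * x)) ∂gammaMeasure a β = (1 + t / β) ^ (-a) := by
  have hpos : 0 < 1 + t / β := by rw [one_add_div hβ.ne']; exact div_pos hβt hβ
  have hbase : β / (β + t) = (1 + t / β)⁻¹ := by field_simp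
  rw [integral_eq_lintegral_of_nonneg_ae (ae_of_all _ fun x => (exp_pos _).le) (by fun_prop),
    lintegral_exp_neg_mul_gammaMeasure ha hβ.le hβt, hbase,
    ENNReal.toReal_ofReal (by positivity), inv_rpow hpos.le, rpow_neg hpos.le]

lemma integral_one_sub_exp_mul_one_sub_exp {Ω : Type*} [MeasurableSpace Ω] {μ : Measure Ω}
    [IsProbabilityMeasure μ] {X Y : Ω → ℝ} (hX : Integrable (fun ω => exp (X ω)) μ)
    (hY : Integrable (fun ω => exp (Y ω)) μ) (hXY : Integrable (fun ω => exp (X ω + Y ω)) μ) :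
    ∫ ω, (1 - exp (X ω)) * (1 - exp (Y ω)) ∂μ
      = 1 - ∫ ω, exp (X ω) ∂μ - ∫ ω, exp (Y ω) ∂μ + ∫ ω, exp (X ω + Y ω) ∂μ := by
  have hexpand (ω : Ω) : (1 - exp (X ω)) * (1 - exp (Y ω))
      = 1 - exp (X ω) - exp (Y ω) + exp (X ω + Y ω) := by
    rw [exp_add]; ring
  have h₁ : Integrable (fun ω => 1 - exp (X ω)) μ := (integrable_const 1).sub hX
  have h₂ : Integrable (fun ω => 1 - exp (X ω) - exp (Y ω)) μ := h₁.sub hY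
  simp only [hexpand]
  rw [integral_add h₂ hXY, integral_sub h₁ hY, integral_sub (integrable_const 1) hX,
    integral_const, probReal_univ, one_smul]

lemma exp_neg_linear_eq_mul (u₁ u₂ u₃ x y z : ℝ) :
    exp (-(u₁ * x + u₂ * y + u₃ * z))
      = exp (-(u₁ * x)) * (exp (-(u₂ * y)) * exp (-(u₃ * z))) := by
  simp only [neg_add, exp_add, mul_assoc]

lemma integrable_exp_neg_linear_sliceMeasure {a₁ a₂ a₃ β u₁ u₂ u₃ : ℝ} (ha₁ : 0 < a₁)
    (ha₂ : 0 < a₂) (ha₃ : 0 < a₃) (hβ : 0 ≤ β) (hu₁ : 0 < β + u₁) (hu₂ : 0 < β + u₂)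
    (hu₃ : 0 < β + u₃) :
    Integrable (fun s : ℝ × ℝ × ℝ => exp (-(u₁ * s.1 + u₂ * s.2.1 + u₃ * s.2.2)))
      (sliceMeasure a₁ a₂ a₃ β) := by
  simp only [exp_neg_linear_eq_mul]
  exact (integrable_exp_neg_mul_gammaMeasure ha₁ hβ hu₁).mul_prod
    ((integrable_exp_neg_mul_gammaMeasure ha₂ hβ hu₂).mul_prod
      (integrable_exp_neg_mul_gammaMeasure ha₃ hβ hu₃))

lemma integral_exp_neg_linear_sliceMeasure {a₁ a₂ a₃ β u₁ u₂ u₃ : ℝ} (ha₁ : 0 < a₁)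
    (ha₂ : 0 < a₂) (ha₃ : 0 < a₃) (hβ : 0 < β) (hu₁ : 0 < β + u₁) (hu₂ : 0 < β + u₂)
    (hu₃ : 0 < β + u₃) :
    ∫ s, exp (-(u₁ * s.1 + u₂ * s.2.1 + u₃ * s.2.2)) ∂sliceMeasure a₁ a₂ a₃ β
      = (1 + u₁ / β) ^ (-a₁) * ((1 + u₂ / β) ^ (-a₂) * (1 + u₃ / β) ^ (-a₃)) := by
  simp only [exp_neg_linear_eq_mul]
  rw [sliceMeasure, integral_prod_mul (fun x => exp (-(u₁ * x)))
      (fun q : ℝ × ℝ => exp (-(u₂ * q.1)) * exp (-(u₃ * q.2))),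
    integral_prod_mul (fun y => exp (-(u₂ * y))) (fun z => exp (-(u₃ * z))),
    integral_exp_neg_mul_gammaMeasure ha₁ hβ hu₁, integral_exp_neg_mul_gammaMeasure ha₂ hβ hu₂,
    integral_exp_neg_mul_gammaMeasure ha₃ hβ hu₃]

/-- Pairwise likelihood, no exceedances: with `Λ₁ = S₁ + S₂`, `Λ₂ = S₂ + S₃` in the
slice model and `a₁ + a₂ = a₂ + a₃ = α`,
`E[(1 - e^{-κΛ₁})(1 - e^{-κΛ₂})]`
`= 1 - 2(1 + κ/β)^{-α} + (1 + κ/β)^{-a₁-a₃}(1 + 2κ/β)^{-a₂}`. -/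
theorem pairwise_likelihood_no_exceedance (β κ a₁ a₂ a₃ α : ℝ)
    (hβ : 0 < β) (hκ : 0 < κ) (ha₁ : 0 < a₁) (ha₂ : 0 < a₂) (ha₃ : 0 < a₃)
    (hα₁ : a₁ + a₂ = α) (hα₂ : a₂ + a₃ = α) :
    (∫ s : ℝ × ℝ × ℝ,
        (1 - Real.exp (-κ * (s.1 + s.2.1))) * (1 - Real.exp (-κ * (s.2.1 + s.2.2)))
        ∂(sliceMeasure a₁ a₂ a₃ β))
      = 1 - 2 * (1 + κ / β) ^ (-α)
          + (1 + κ / β) ^ (-a₁ - a₃) * (1 + 2 * κ / β) ^ (-a₂) := by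
  have := isProbabilityMeasure_sliceMeasure ha₁ ha₂ ha₃ hβ
  have hΛ₁ (s : ℝ × ℝ × ℝ) : -κ * (s.1 + s.2.1) = -(κ * s.1 + κ * s.2.1 + 0 * s.2.2) := by ring
  have hΛ₂ (s : ℝ × ℝ × ℝ) : -κ * (s.2.1 + s.2.2) = -(0 * s.1 + κ * s.2.1 + κ * s.2.2) := by ring
  have hΛ₁₂ (s : ℝ × ℝ × ℝ) :
      -(κ * s.1 + κ * s.2.1 + 0 * s.2.2) + -(0 * s.1 + κ * s.2.1 + κ * s.2.2)
        = -(κ * s.1 + 2 * κ * s.2.1 + κ * s.2.2) := by ring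
  have h₀ : 0 < β + 0 := by linarith
  have h₁ : 0 < β + κ := by linarith
  have h₂ : 0 < β + 2 * κ := by linarith
  simp only [hΛ₁, hΛ₂]
  rw [integral_one_sub_exp_mul_one_sub_exp
    (integrable_exp_neg_linear_sliceMeasure ha₁ ha₂ ha₃ hβ.le h₁ h₁ h₀)
    (integrable_exp_neg_linear_sliceMeasure ha₁ ha₂ ha₃ hβ.le h₀ h₁ h₁)
    (by simpa only [hΛ₁₂] using integrable_exp_neg_linear_sliceMeasure ha₁ ha₂ ha₃ hβ.le h₁ h₂ h₁)]
  simp only [hΛ₁₂]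
  rw [integral_exp_neg_linear_sliceMeasure ha₁ ha₂ ha₃ hβ h₁ h₁ h₀,
    integral_exp_neg_linear_sliceMeasure ha₁ ha₂ ha₃ hβ h₀ h₁ h₁,
    integral_exp_neg_linear_sliceMeasure ha₁ ha₂ ha₃ hβ h₁ h₂ h₁]
  obtain rfl : a₁ = a₃ := by linarith
  have hpos : 0 < 1 + κ / β := by positivity
  simp only [zero_div, add_zero, one_rpow, mul_one, one_mul]
  rw [← hα₁, neg_add, sub_eq_add_neg (-a₁), rpow_add hpos, rpow_add hpos]
  ring
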